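/- Let I be a monomial ideal in R and let b_0, b_1 be distinct variables satisfying condition (⋆) with respect to I. Then for every integer t with 1 ≤ t ≤ 3, the colon ideal satisfies (I^t : (b_0 + b_1)) = (I^t : b_0) ∩ (I^t : b_1); in particular, (I^t : (b_0 + b_1)) is a monomial ideal for t ≤ 3. -/

import Mathlib

/-!
Write `e_x` for the exponent vector of the variable `x`. Condition (⋆) says that every minimal
generator `g` of `I` has `g b₀ ≤ g b₁ ≤ 1`, so `Iᵗ` is spanned by monomials `x^d` with
`d b₀ ≤ d b₁ ≤ t`.

Let `f (b₀ + b₁) ∈ Iᵗ` and let `x^a` be a term of `f`. The coefficient of `x^(a + e_b₁)` in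
`f (b₀ + b₁)` is `f_a + f_(a - e_b₀ + e_b₁)`: either it is nonzero, so `x^(a + e_b₁) ∈ Iᵗ`, or
`a - e_b₀ + e_b₁` is again a term of `f`. Following this chain, and the symmetric one, gives two
monomials of `Iᵗ` on the line through `a + e_b₀` and `a + e_b₁` in direction `e_b₀ - e_b₁`, one on
either side of these two points. For `t ≤ 3` the exponents of `Iᵗ` on such a line form an
interval: a point between two of them dominates the generator below one of the ends, since
otherwise the `b₁`-degrees of the two generators could not both be at most `3`. Hence `f b₀` and
`f b₁` lie in `Iᵗ`.
-/

open MvPolynomial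

variable {σ k : Type*} [Field k]

/-- `I` is a monomial ideal if it is generated by monomials. -/
def IsMonomialIdeal (I : Ideal (MvPolynomial σ k)) : Prop :=
  ∃ S : Set (σ →₀ ℕ),
    I = Ideal.span ((fun a => (monomial a (1 : k) : MvPolynomial σ k)) '' S)

/-- The exponents of the minimal monomial generators `G(I)` of a monomial ideal `I`:
the monomials in `I` that are minimal with respect to divisibility
(`x^b ∣ x^a ↔ b ≤ a`). -/
def minimalGens (I : Ideal (MvPolynomial σ k)) : Set (σ →₀ ℕ) :=
  {a | (monomial a (1 : k) : MvPolynomial σ k) ∈ I ∧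
    ∀ b : σ →₀ ℕ, (monomial b (1 : k) : MvPolynomial σ k) ∈ I → b ≤ a → b = a}

theorem Finsupp.apply_eq_of_add_single_eq_add_single {u v : σ →₀ ℕ} {p q : σ} {n : ℕ}
    (hpq : p ≠ q) (h : u + Finsupp.single p n = v + Finsupp.single q n) :
    u p + n = v p ∧ u q = v q + n ∧ ∀ x, x ≠ p → x ≠ q → u x = v x := by
  have hx := fun x => DFunLike.congr_fun h x
  refine ⟨by simpa [hpq] using hx p, by simpa [hpq.symm] using hx q, fun x hxp hxq => ?_⟩
  simpa [Finsupp.single_apply, hxp.symm, hxq.symm] using hx x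

namespace MvPolynomial

variable {R : Type*} [CommSemiring R]

theorem monomial_mem_of_le {J : Ideal (MvPolynomial σ R)} {a b : σ →₀ ℕ}
    (ha : monomial a (1 : R) ∈ J) (hab : a ≤ b) : monomial b (1 : R) ∈ J :=
  J.mem_of_dvd (monomial_dvd_monomial.mpr ⟨Or.inr hab, one_dvd _⟩) ha

theorem monomial_mem_ideal_span_monomial_image [Nontrivial R] {S : Set (σ →₀ ℕ)}
    {m : σ →₀ ℕ} :
    monomial m (1 : R) ∈ Ideal.span ((fun s => monomial s (1 : R)) '' S) ↔ ∃ s ∈ S, s ≤ m := by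
  classical
  rw [mem_ideal_span_monomial_image, support_monomial, if_neg one_ne_zero]
  simp

theorem pow_eq_span_monomial_of_le_of_le_one {I : Ideal (MvPolynomial σ R)} {S : Set (σ →₀ ℕ)}
    {p q : σ} (hI : I = Ideal.span ((fun s => monomial s (1 : R)) '' S))
    (hS : ∀ s ∈ S, s p ≤ s q ∧ s q ≤ 1) (t : ℕ) :
    I ^ t = Ideal.span ((fun d => monomial d (1 : R)) ''
      {d | monomial d (1 : R) ∈ I ^ t ∧ d p ≤ d q ∧ d q ≤ t}) := by
  refine le_antisymm ?_ (Ideal.span_le.mpr ?_)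
  · induction t with
    | zero =>
      rw [pow_zero, Ideal.one_eq_top, top_le_iff, Ideal.eq_top_iff_one]
      exact Ideal.subset_span ⟨0, ⟨by simp, le_rfl, le_rfl⟩, by simp⟩
    | succ t ih =>
      refine (pow_succ I t).le.trans ((Ideal.mul_mono ih hI.le).trans ?_)
      rw [Ideal.span_mul_span']
      refine Ideal.span_mono ?_
      rintro _ ⟨_, ⟨d, ⟨hdI, hdpq, hdq⟩, rfl⟩, _, ⟨s, hs, rfl⟩, rfl⟩
      refine ⟨d + s, ⟨?_, ?_, ?_⟩, by simp [monomial_mul]⟩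
      · rw [← mul_one (1 : R), ← monomial_mul, pow_succ]
        exact Ideal.mul_mem_mul hdI (hI ▸ Ideal.subset_span ⟨s, hs, rfl⟩)
      · have := hS s hs; simp only [Finsupp.add_apply]; omega
      · have := hS s hs; simp only [Finsupp.add_apply]; omega
  · rintro _ ⟨d, hd, rfl⟩
    exact hd.1

theorem monomial_mem_of_add_single_eq_add_single [Nontrivial R] {D : Set (σ →₀ ℕ)} {p q : σ}
    (hpq : p ≠ q) (hD : ∀ d ∈ D, d p ≤ d q ∧ d q ≤ 3) {u v w : σ →₀ ℕ} {i s : ℕ} (his : i ≤ s)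
    (huv : u + Finsupp.single p s = v + Finsupp.single q s)
    (huw : u + Finsupp.single p i = w + Finsupp.single q i)
    (hu : monomial u (1 : R) ∈ Ideal.span ((fun d => monomial d (1 : R)) '' D))
    (hv : monomial v (1 : R) ∈ Ideal.span ((fun d => monomial d (1 : R)) '' D)) :
    monomial w (1 : R) ∈ Ideal.span ((fun d => monomial d (1 : R)) '' D) := by
  rw [monomial_mem_ideal_span_monomial_image] at hu hv ⊢
  obtain ⟨d, hd, hdu⟩ := hu
  obtain ⟨d', hd', hdv⟩ := hv
  obtain ⟨hvp, hvq, hvx⟩ := Finsupp.apply_eq_of_add_single_eq_add_single hpq huv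
  obtain ⟨hwp, hwq, hwx⟩ := Finsupp.apply_eq_of_add_single_eq_add_single hpq huw
  by_cases hdq : d q ≤ w q
  · refine ⟨d, hd, fun x => ?_⟩
    have := hdu x
    rcases eq_or_ne x p with rfl | hxp
    · omega
    rcases eq_or_ne x q with rfl | hxq
    · exact hdq
    · have := hwx x hxp hxq; omega
  by_cases hdp' : d' p ≤ w p
  · refine ⟨d', hd', fun x => ?_⟩
    have := hdv x
    rcases eq_or_ne x p with rfl | hxp
    · exact hdp'
    rcases eq_or_ne x q with rfl | hxq
    · omega
    · have := hvx x hxp hxq; have := hwx x hxp hxq; omega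
  -- now `w q < d q ≤ 3` and `w p < d' p ≤ d' q ≤ v q`, which force both `2 ≤ s` and `s ≤ 1`
  have := hdu q; have := hdv p; have := hdv q; have := hD d hd; have := hD d' hd'
  omega

end MvPolynomial

section MonomialIdeal

variable {J : Ideal (MvPolynomial σ k)}

theorem IsMonomialIdeal.eq_span (hJ : IsMonomialIdeal J) :
    J = Ideal.span ((fun c => monomial c (1 : k)) '' {c | monomial c (1 : k) ∈ J}) := by
  obtain ⟨S, hS⟩ := hJ
  refine le_antisymm (fun f hf => ?_) (Ideal.span_le.mpr ?_)
  · rw [hS, mem_ideal_span_monomial_image] at hf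
    refine mem_ideal_span_monomial_image.mpr fun c hc => ⟨c, ?_, le_rfl⟩
    obtain ⟨s, hs, hsc⟩ := hf c hc
    exact monomial_mem_of_le (hS ▸ Ideal.subset_span ⟨s, hs, rfl⟩) hsc
  · rintro _ ⟨c, hc, rfl⟩
    exact hc

theorem IsMonomialIdeal.mem_iff (hJ : IsMonomialIdeal J) {f : MvPolynomial σ k} :
    f ∈ J ↔ ∀ c ∈ f.support, monomial c (1 : k) ∈ J := by
  conv_lhs => rw [hJ.eq_span]
  rw [mem_ideal_span_monomial_image]
  exact forall₂_congr fun c _ =>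
    ⟨fun ⟨_, hs, hsc⟩ => monomial_mem_of_le hs hsc, fun hc => ⟨c, hc, le_rfl⟩⟩

theorem isMonomialIdeal_of_forall_monomial_mem
    (h : ∀ f ∈ J, ∀ c ∈ f.support, monomial c (1 : k) ∈ J) : IsMonomialIdeal J := by
  refine ⟨{c | monomial c (1 : k) ∈ J}, le_antisymm (fun f hf => ?_) (Ideal.span_le.mpr ?_)⟩
  · exact mem_ideal_span_monomial_image.mpr fun c hc => ⟨c, h f hf c hc, le_rfl⟩
  · rintro _ ⟨c, hc, rfl⟩
    exact hc

theorem IsMonomialIdeal.inf {J' : Ideal (MvPolynomial σ k)} (hJ : IsMonomialIdeal J)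
    (hJ' : IsMonomialIdeal J') : IsMonomialIdeal (J ⊓ J') :=
  isMonomialIdeal_of_forall_monomial_mem fun _ hf c hc =>
    ⟨hJ.mem_iff.mp hf.1 c hc, hJ'.mem_iff.mp hf.2 c hc⟩

theorem IsMonomialIdeal.colon_span_X (hJ : IsMonomialIdeal J) (b : σ) :
    IsMonomialIdeal (J.colon (Ideal.span {(X b : MvPolynomial σ k)})) := by
  refine isMonomialIdeal_of_forall_monomial_mem fun f hf c hc => ?_
  simp only [Ideal.mem_colon_span_singleton] at hf ⊢
  rw [← pow_one (X b), ← monomial_add_single]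
  refine hJ.mem_iff.mp hf _ ?_
  rw [support_mul_X]
  exact Finset.mem_map_of_mem _ hc

theorem IsMonomialIdeal.eq_span_minimalGens (hJ : IsMonomialIdeal J) :
    J = Ideal.span ((fun c => monomial c (1 : k)) '' minimalGens J) := by
  refine le_antisymm (fun f hf => ?_) (Ideal.span_le.mpr ?_)
  · refine mem_ideal_span_monomial_image.mpr fun c hc => ?_
    obtain ⟨g, hgc, hg⟩ :=
      exists_minimal_le_of_wellFoundedLT (fun c => monomial c (1 : k) ∈ J) c (hJ.mem_iff.mp hf c hc)
    exact ⟨g, ⟨hg.prop, fun b hb hbg => le_antisymm hbg (hg.2 hb hbg)⟩, hgc⟩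
  · rintro _ ⟨c, hc, rfl⟩
    exact hc.1

theorem IsMonomialIdeal.exists_add_single_eq_of_mul_X_add_X_mem (hJ : IsMonomialIdeal J)
    {p q : σ} (hpq : p ≠ q) {f : MvPolynomial σ k} (hf : f * (X p + X q) ∈ J)
    {a : σ →₀ ℕ} (ha : a ∈ f.support) :
    ∃ r z, z + Finsupp.single p r = a + Finsupp.single q r ∧
      monomial (z + Finsupp.single q 1) (1 : k) ∈ J := by
  classical
  have hmem : ∀ c, coeff (c + Finsupp.single q 1) (f * (X p + X q)) ≠ 0 →
      monomial (c + Finsupp.single q 1) (1 : k) ∈ J :=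
    fun c hc => hJ.mem_iff.mp hf _ (mem_support_iff.mpr hc)
  have hcoeff : ∀ c, coeff (c + Finsupp.single q 1) (f * (X p + X q)) =
      coeff (c + Finsupp.single q 1) (f * X p) + coeff c f := by
    intro c
    rw [mul_add, coeff_add, coeff_mul_X]
  obtain ⟨n, hn⟩ : ∃ n, a p = n := ⟨_, rfl⟩
  induction n generalizing a with
  | zero =>
    refine ⟨0, a, by simp, hmem a ?_⟩
    rw [hcoeff, coeff_mul_X', if_neg (by simp [hn, hpq]), zero_add]
    exact mem_support_iff.mp ha
  | succ n ih =>
    by_cases hc : coeff (a + Finsupp.single q 1) (f * (X p + X q)) = 0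
    swap
    · exact ⟨0, a, by simp, hmem a hc⟩
    -- `f_a + f_(a - e_p + e_q) = 0`, so the chain continues at `a - e_p + e_q`
    obtain ⟨a', rfl⟩ : ∃ a', a = a' + Finsupp.single p 1 :=
      ⟨a - Finsupp.single p 1, (tsub_add_cancel_of_le (Finsupp.single_le_iff.mpr (by omega))).symm⟩
    rw [hcoeff, add_right_comm, coeff_mul_X] at hc
    obtain ⟨r, z, hz, hzJ⟩ := ih (a := a' + Finsupp.single q 1)
      (mem_support_iff.mpr fun h => mem_support_iff.mp ha (by simpa [h] using hc))
      (by simpa [hpq.symm] using hn)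
    refine ⟨r + 1, z, ?_, hzJ⟩
    rw [Finsupp.single_add, Finsupp.single_add, ← add_assoc, hz]
    abel

end MonomialIdeal

section Colon

variable {J : Ideal (MvPolynomial σ k)} {D : Set (σ →₀ ℕ)} {p q : σ}

theorem mul_X_mem_of_mul_X_add_X_mem (hJ : J = Ideal.span ((fun d => monomial d (1 : k)) '' D))
    (hpq : p ≠ q) (hD : ∀ d ∈ D, d p ≤ d q ∧ d q ≤ 3) {f : MvPolynomial σ k}
    (hf : f * (X p + X q) ∈ J) : f * X p ∈ J ∧ f * X q ∈ J := by
  subst hJ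
  have hJ : IsMonomialIdeal (Ideal.span ((fun d => monomial d (1 : k)) '' D)) := ⟨D, rfl⟩
  suffices h : ∀ a ∈ f.support,
      monomial (a + Finsupp.single p 1) (1 : k) ∈ Ideal.span ((fun d => monomial d 1) '' D) ∧
      monomial (a + Finsupp.single q 1) (1 : k) ∈ Ideal.span ((fun d => monomial d 1) '' D) by
    rw [hJ.mem_iff, hJ.mem_iff]
    simp only [support_mul_X, Finset.forall_mem_map, addRightEmbedding_apply]
    exact ⟨fun a ha => (h a ha).1, fun a ha => (h a ha).2⟩
  intro a ha
  obtain ⟨r, z, hz, hzJ⟩ := hJ.exists_add_single_eq_of_mul_X_add_X_mem hpq hf ha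
  obtain ⟨r', z', hz', hz'J⟩ :=
    hJ.exists_add_single_eq_of_mul_X_add_X_mem hpq.symm (by rwa [add_comm] at hf) ha
  -- `a + e_p` and `a + e_q` lie on the segment from `z + e_q` to `z' + e_p`, direction `e_p - e_q`
  have hseg : z + Finsupp.single q 1 + Finsupp.single p (r + r' + 1) =
      z' + Finsupp.single p 1 + Finsupp.single q (r + r' + 1) := by
    calc _ = z + Finsupp.single p r + Finsupp.single p r' + Finsupp.single p 1 +
          Finsupp.single q 1 := by rw [Finsupp.single_add, Finsupp.single_add]; abel
      _ = a + Finsupp.single p r' + Finsupp.single q r + Finsupp.single p 1 +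
          Finsupp.single q 1 := by rw [hz]; abel
      _ = _ := by rw [← hz', Finsupp.single_add, Finsupp.single_add]; abel
  refine ⟨monomial_mem_of_add_single_eq_add_single hpq hD (i := r + 1) (by omega) hseg ?_ hzJ hz'J,
    monomial_mem_of_add_single_eq_add_single hpq hD (i := r) (by omega) hseg ?_ hzJ hz'J⟩
  · rw [add_right_comm, Finsupp.single_add, ← add_assoc, hz, Finsupp.single_add]; abel
  · rw [add_right_comm, hz, add_right_comm]

theorem colon_span_X_add_X_eq_inf (hJ : J = Ideal.span ((fun d => monomial d (1 : k)) '' D))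
    (hpq : p ≠ q) (hD : ∀ d ∈ D, d p ≤ d q ∧ d q ≤ 3) :
    J.colon (Ideal.span {(X p + X q : MvPolynomial σ k)}) =
      J.colon (Ideal.span {(X p : MvPolynomial σ k)}) ⊓
        J.colon (Ideal.span {(X q : MvPolynomial σ k)}) := by
  ext f
  simp only [Ideal.mem_colon_span_singleton, Ideal.mem_inf]
  exact ⟨mul_X_mem_of_mul_X_add_X_mem hJ hpq hD, fun h => mul_add f _ _ ▸ add_mem h.1 h.2⟩

end Colon

theorem stmt7_general
    (I : Ideal (MvPolynomial σ k)) (hI : IsMonomialIdeal I)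
    (b0 b1 : σ) (hb : b0 ≠ b1)
    (hstar1 : ∀ a ∈ minimalGens I, a b0 ≤ 1 ∧ a b1 ≤ 1)
    (hstar2 : ∀ a ∈ minimalGens I, 1 ≤ a b0 → 1 ≤ a b1)
    (t : ℕ) (ht3 : t ≤ 3) :
    (I ^ t).colon (Ideal.span {(X b0 + X b1 : MvPolynomial σ k)})
        = (I ^ t).colon (Ideal.span {(X b0 : MvPolynomial σ k)})
          ⊓ (I ^ t).colon (Ideal.span {(X b1 : MvPolynomial σ k)}) ∧
      IsMonomialIdeal ((I ^ t).colon (Ideal.span {(X b0 + X b1 : MvPolynomial σ k)})) := by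
  have hgens : ∀ a ∈ minimalGens I, a b0 ≤ a b1 ∧ a b1 ≤ 1 := fun a ha => by
    have := hstar1 a ha; have := hstar2 a ha; omega
  have hpow := pow_eq_span_monomial_of_le_of_le_one hI.eq_span_minimalGens hgens t
  have hcolon : (I ^ t).colon (Ideal.span {(X b0 + X b1 : MvPolynomial σ k)})
      = (I ^ t).colon (Ideal.span {(X b0 : MvPolynomial σ k)})
        ⊓ (I ^ t).colon (Ideal.span {(X b1 : MvPolynomial σ k)}) :=
    colon_span_X_add_X_eq_inf hpow hb fun d hd => ⟨hd.2.1, hd.2.2.trans ht3⟩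
  have hIt : IsMonomialIdeal (I ^ t) := ⟨_, hpow⟩
  exact ⟨hcolon, hcolon ▸ (hIt.colon_span_X b0).inf (hIt.colon_span_X b1)⟩

/-- Let `I` be a monomial ideal and `b₀, b₁` distinct variables
satisfying condition (⋆): every `a ∈ G(I)` has `b₀`- and `b₁`-exponent at most 1, and
every element of `G(I)` divisible by `b₀` is divisible by `b₁`.  Then for every
`1 ≤ t ≤ 3`, `(Iᵗ : (b₀+b₁)) = (Iᵗ : b₀) ∩ (Iᵗ : b₁)`; in particular,
`(Iᵗ : (b₀+b₁))` is a monomial ideal. -/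
theorem stmt7 [Fintype σ]
    (I : Ideal (MvPolynomial σ k)) (hI : IsMonomialIdeal I)
    (b0 b1 : σ) (hb : b0 ≠ b1)
    (hstar1 : ∀ a ∈ minimalGens I, a b0 ≤ 1 ∧ a b1 ≤ 1)
    (hstar2 : ∀ a ∈ minimalGens I, 1 ≤ a b0 → 1 ≤ a b1)
    (t : ℕ) (ht1 : 1 ≤ t) (ht3 : t ≤ 3) :
    (I ^ t).colon (Ideal.span {(X b0 + X b1 : MvPolynomial σ k)})
        = (I ^ t).colon (Ideal.span {(X b0 : MvPolynomial σ k)})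
          ⊓ (I ^ t).colon (Ideal.span {(X b1 : MvPolynomial σ k)}) ∧
      IsMonomialIdeal ((I ^ t).colon (Ideal.span {(X b0 + X b1 : MvPolynomial σ k)})) :=
  stmt7_general I hI b0 b1 hb hstar1 hstar2 t ht3
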